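/- Let V be a random element of a separable Hilbert space H with mean μ and finite second moment, and suppose V has k principal points ξ₁,...,ξ_k ∈ H. Then the dimension of the linear span of ξ₁ − μ, ..., ξ_k − μ is strictly smaller than k. -/

import Mathlib

open MeasureTheory ProbabilityTheory
open scoped RealInnerProductSpace

noncomputable section

variable {Ω : Type*} [MeasurableSpace Ω]

/-- `V` is an elliptical random element with location `μ0` and scatter operator `Γ`:
there is a characteristic generator `φ` such that every bounded linear image `B V` into a
Euclidean space has characteristic function `t ↦ φ (⟪t, B Γ B* t⟫)` after centering at `B μ0`. -/
def IsElliptical {H : Type*} [NormedAddCommGroup H] [InnerProductSpace ℝ H] [CompleteSpace H]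
    (P : Measure Ω) (V : Ω → H) (μ0 : H) (Γ : H →L[ℝ] H) : Prop :=
  ∃ φ : ℝ → ℂ, ∀ (d : ℕ) (B : H →L[ℝ] EuclideanSpace ℝ (Fin d))
    (t : EuclideanSpace ℝ (Fin d)),
    (∫ ω, Complex.exp (Complex.I * ((⟪t, B (V ω) - B μ0⟫ : ℝ) : ℂ)) ∂P)
      = φ (⟪t, (B ∘L Γ ∘L (ContinuousLinearMap.adjoint B)) t⟫ : ℝ)

/-- `G` is the covariance operator of `V`: `⟪G u, v⟫ = Cov(⟪u, V⟫, ⟪v, V⟫)`. -/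
def IsCovOp {H : Type*} [NormedAddCommGroup H] [InnerProductSpace ℝ H]
    (P : Measure Ω) (V : Ω → H) (G : H →L[ℝ] H) : Prop :=
  ∀ u v : H, (⟪G u, v⟫ : ℝ) =
    ∫ ω, ((⟪u, V ω⟫ : ℝ) - ∫ ω', (⟪u, V ω'⟫ : ℝ) ∂P)
        * ((⟪v, V ω⟫ : ℝ) - ∫ ω', (⟪v, V ω'⟫ : ℝ) ∂P) ∂P

/-- Domain of attraction of `y j` among the points `y 0, …, y (k-1)`, with ties assigned
to the lowest index. -/
def attractionDomain {H : Type*} [NormedAddCommGroup H] {k : ℕ}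
    (y : Fin k → H) (j : Fin k) : Set H :=
  {x | (∀ ℓ, ‖x - y j‖ ≤ ‖x - y ℓ‖) ∧ ∀ ℓ, ℓ < j → ‖x - y j‖ < ‖x - y ℓ‖}

/-- The points `y 0, …, y (k-1)` are self-consistent for `V`:
`E(V | V ∈ D_j) = y j` for each domain of attraction `D_j`. -/
def SelfConsistent {H : Type*} [NormedAddCommGroup H] [NormedSpace ℝ H] {k : ℕ}
    (P : Measure Ω) (V : Ω → H) (y : Fin k → H) : Prop :=
  ∀ j, ∫ ω in V ⁻¹' attractionDomain y j, V ω ∂P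
        = (P (V ⁻¹' attractionDomain y j)).toReal • y j

/-- The points `y 0, …, y (k-1)` are principal points of `V`: they minimize the expected
squared distance to the nearest of `k` points. -/
def IsPrincipal {H : Type*} [NormedAddCommGroup H] {k : ℕ}
    (P : Measure Ω) (V : Ω → H) (y : Fin k → H) : Prop :=
  ∀ z : Fin k → H,
    (∫ ω, (⨅ j, ‖V ω - y j‖) ^ 2 ∂P) ≤ ∫ ω, (⨅ j, ‖V ω - z j‖) ^ 2 ∂P

/-!
Principal points are self-consistent: replacing each `ξ j` by the mean `m j` of `V` over its
domain of attraction `D j` lowers the quantization error by at least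
`∑ j, P(V ∈ D j) * ‖m j - ξ j‖ ^ 2` (parallel axis theorem), so by optimality this
sum vanishes. Hence `μ0 = ∑ j, p j • ξ j` with `p j = P(V ∈ D j)` and `∑ j, p j = 1`, a nontrivial
linear relation among the `ξ j - μ0`.
-/

section AttractionDomain

variable {H : Type*} [NormedAddCommGroup H] {k : ℕ}

theorem measurableSet_attractionDomain [MeasurableSpace H] [OpensMeasurableSpace H]
    (y : Fin k → H) (j : Fin k) : MeasurableSet (attractionDomain y j) := by
  have hdist : ∀ a : H, Continuous fun x : H => ‖x - a‖ := fun a => by fun_prop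
  have hset : attractionDomain y j =
      (⋂ ℓ, {x | ‖x - y j‖ ≤ ‖x - y ℓ‖}) ∩ ⋂ ℓ, ⋂ _ : ℓ < j, {x | ‖x - y j‖ < ‖x - y ℓ‖} := by
    ext x
    simp [attractionDomain]
  rw [hset]
  exact (MeasurableSet.iInter fun ℓ => (isClosed_le (hdist _) (hdist _)).measurableSet).inter
    (MeasurableSet.iInter fun ℓ => MeasurableSet.iInter fun _ =>
      (isOpen_lt (hdist _) (hdist _)).measurableSet)

theorem pairwise_disjoint_attractionDomain (y : Fin k → H) :
    Pairwise (Function.onFun Disjoint (attractionDomain y)) := by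
  intro i j hij
  rw [Function.onFun, Set.disjoint_left]
  rintro x ⟨hle_i, hlt_i⟩ ⟨hle_j, hlt_j⟩
  rcases hij.lt_or_gt with h | h
  · exact (hle_i j).not_gt (hlt_j i h)
  · exact (hle_j i).not_gt (hlt_i j h)

/-- The cell of `x` is the first index at which the distance from `x` is minimal. -/
theorem iUnion_attractionDomain [NeZero k] (y : Fin k → H) :
    ⋃ j, attractionDomain y j = Set.univ := by
  refine Set.eq_univ_of_forall fun x => Set.mem_iUnion.2 ?_
  let S : Set (Fin k) := {j | ∀ ℓ, ‖x - y j‖ ≤ ‖x - y ℓ‖}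
  have hS : S.Nonempty := Finite.exists_min fun j => ‖x - y j‖
  set j := wellFounded_lt.min S hS
  have hj : j ∈ S := wellFounded_lt.min_mem S hS
  refine ⟨j, hj, fun ℓ hℓ => ?_⟩
  have hℓ : ℓ ∉ S := fun h => wellFounded_lt.not_lt_min S h hℓ
  obtain ⟨ℓ', hℓ'⟩ : ∃ ℓ', ‖x - y ℓ'‖ < ‖x - y ℓ‖ := by simpa [S] using hℓ
  exact (hj ℓ').trans_lt hℓ'

theorem iInf_norm_sub_eq_of_mem_attractionDomain {y : Fin k → H} {j : Fin k} {x : H}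
    (hx : x ∈ attractionDomain y j) : ⨅ ℓ, ‖x - y ℓ‖ = ‖x - y j‖ :=
  have : Nonempty (Fin k) := ⟨j⟩
  le_antisymm (ciInf_le (Finite.bddBelow_range _) j) (le_ciInf hx.1)

end AttractionDomain

section Variance

variable {H : Type*} [NormedAddCommGroup H] [InnerProductSpace ℝ H]
  {μ : Measure Ω} [IsFiniteMeasure μ] {V : Ω → H}

theorem integrable_norm_sub_sq (hV : Integrable V μ)
    (hV2 : Integrable (fun ω => ‖V ω‖ ^ 2) μ) (c : H) :
    Integrable (fun ω => ‖V ω - c‖ ^ 2) μ := by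
  have hexpand : (fun ω => ‖V ω - c‖ ^ 2) = fun ω => ‖V ω‖ ^ 2 - 2 * ⟪V ω, c⟫ + ‖c‖ ^ 2 := by
    ext ω
    exact norm_sub_sq_real _ _
  rw [hexpand]
  exact (hV2.sub ((hV.inner_const c).const_mul 2)).add (integrable_const _)

theorem integral_norm_sub_sq_eq_add [CompleteSpace H] (hV : Integrable V μ)
    (hV2 : Integrable (fun ω => ‖V ω‖ ^ 2) μ) (c : H) :
    ∫ ω, ‖V ω - c‖ ^ 2 ∂μ
      = ∫ ω, ‖V ω - ⨍ ω', V ω' ∂μ‖ ^ 2 ∂μ + μ.real Set.univ * ‖(⨍ ω, V ω ∂μ) - c‖ ^ 2 := by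
  set m := ⨍ ω, V ω ∂μ
  have hcross : ∫ ω, ⟪m - c, V ω - m⟫ ∂μ = 0 := by
    rw [integral_inner (f := fun ω => V ω - m) (hV.sub (integrable_const m)),
      integral_sub hV (integrable_const m), integral_const, measure_smul_average, sub_self,
      inner_zero_right]
  have hexpand : ∀ ω, ‖V ω - c‖ ^ 2 = ‖V ω - m‖ ^ 2 + 2 * ⟪m - c, V ω - m⟫ + ‖m - c‖ ^ 2 := by
    intro ω
    rw [real_inner_comm, ← norm_add_sq_real, sub_add_sub_cancel]
  simp_rw [hexpand]
  rw [integral_add _ (integrable_const _), integral_add, integral_const_mul, hcross,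
    integral_const, smul_eq_mul]
  · ring
  · exact integrable_norm_sub_sq hV hV2 m
  · exact ((hV.sub (integrable_const m)).const_inner (m - c)).const_mul 2
  · exact (integrable_norm_sub_sq hV hV2 m).add
      (((hV.sub (integrable_const m)).const_inner (m - c)).const_mul 2)

end Variance

section Cells

variable {H : Type*} [NormedAddCommGroup H] [MeasurableSpace H] [OpensMeasurableSpace H]
  {P : Measure Ω} {V : Ω → H} {k : ℕ} [NeZero k]

theorem integral_eq_sum_setIntegral_attractionDomain {E : Type*} [NormedAddCommGroup E]
    [NormedSpace ℝ E] (hV : Measurable V) (y : Fin k → H) {g : Ω → E}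
    (hg : Integrable g P) :
    ∫ ω, g ω ∂P = ∑ j, ∫ ω in V ⁻¹' attractionDomain y j, g ω ∂P := by
  rw [← integral_iUnion_fintype (fun j => hV (measurableSet_attractionDomain y j))
      (fun i j hij => (pairwise_disjoint_attractionDomain y hij).preimage V)
      fun j => hg.integrableOn,
    ← Set.preimage_iUnion, iUnion_attractionDomain, Set.preimage_univ, setIntegral_univ]

theorem sum_toReal_measure_preimage_attractionDomain [IsProbabilityMeasure P] (hV : Measurable V)
    (y : Fin k → H) : ∑ j, (P (V ⁻¹' attractionDomain y j)).toReal = 1 := by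
  simpa [Measure.real] using
    (integral_eq_sum_setIntegral_attractionDomain (P := P) hV y (integrable_const (1 : ℝ))).symm

theorem SelfConsistent.sum_smul_eq_integral [NormedSpace ℝ H] {y : Fin k → H}
    (hsc : SelfConsistent P V y) (hV : Measurable V) (hInt : Integrable V P) :
    ∑ j, (P (V ⁻¹' attractionDomain y j)).toReal • y j = ∫ ω, V ω ∂P := by
  rw [integral_eq_sum_setIntegral_attractionDomain hV y hInt]
  exact Finset.sum_congr rfl fun j _ => (hsc j).symm

theorem integrable_iInf_norm_sub_sq [IsFiniteMeasure P] [InnerProductSpace ℝ H]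
    (hV : Measurable V) (hInt : Integrable V P) (hV2 : Integrable (fun ω => ‖V ω‖ ^ 2) P)
    (y : Fin k → H) :
    Integrable (fun ω => (⨅ j, ‖V ω - y j‖) ^ 2) P := by
  have hmeas : Measurable fun ω => (⨅ j, ‖V ω - y j‖) ^ 2 :=
    (Measurable.iInf fun j => (by fun_prop : Continuous fun x : H => ‖x - y j‖).measurable.comp hV)
      |>.pow_const 2
  refine (integrable_norm_sub_sq hInt hV2 (y 0)).mono' hmeas.aestronglyMeasurable
    (.of_forall fun ω => ?_)
  rw [Real.norm_of_nonneg (sq_nonneg _)]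
  exact pow_le_pow_left₀ (le_ciInf fun j => norm_nonneg _)
    (ciInf_le (Finite.bddBelow_range _) _) 2

theorem integral_iInf_norm_sub_sq_eq_sum [IsFiniteMeasure P] [InnerProductSpace ℝ H]
    (hV : Measurable V) (hInt : Integrable V P) (hV2 : Integrable (fun ω => ‖V ω‖ ^ 2) P)
    (y : Fin k → H) :
    ∫ ω, (⨅ j, ‖V ω - y j‖) ^ 2 ∂P
      = ∑ j, ∫ ω in V ⁻¹' attractionDomain y j, ‖V ω - y j‖ ^ 2 ∂P := by
  rw [integral_eq_sum_setIntegral_attractionDomain hV y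
    (integrable_iInf_norm_sub_sq hV hInt hV2 y)]
  refine Finset.sum_congr rfl fun j _ => setIntegral_congr_fun
    (hV (measurableSet_attractionDomain y j)) fun ω hω => ?_
  rw [iInf_norm_sub_eq_of_mem_attractionDomain hω]

theorem integral_iInf_norm_sub_sq_le_sum [IsFiniteMeasure P] [InnerProductSpace ℝ H]
    (hV : Measurable V) (hInt : Integrable V P) (hV2 : Integrable (fun ω => ‖V ω‖ ^ 2) P)
    (y z : Fin k → H) :
    ∫ ω, (⨅ j, ‖V ω - z j‖) ^ 2 ∂P
      ≤ ∑ j, ∫ ω in V ⁻¹' attractionDomain y j, ‖V ω - z j‖ ^ 2 ∂P := by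
  rw [integral_eq_sum_setIntegral_attractionDomain hV y
    (integrable_iInf_norm_sub_sq hV hInt hV2 z)]
  refine Finset.sum_le_sum fun j _ => setIntegral_mono_on
    (integrable_iInf_norm_sub_sq hV hInt hV2 z).integrableOn
    (integrable_norm_sub_sq hInt hV2 (z j)).integrableOn
    (hV (measurableSet_attractionDomain y j)) fun ω _ => ?_
  exact pow_le_pow_left₀ (le_ciInf fun j => norm_nonneg _)
    (ciInf_le (Finite.bddBelow_range _) j) 2

end Cells

theorem IsPrincipal.selfConsistent {H : Type*} [NormedAddCommGroup H] [InnerProductSpace ℝ H]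
    [CompleteSpace H] [MeasurableSpace H] [OpensMeasurableSpace H] {P : Measure Ω}
    [IsProbabilityMeasure P] {V : Ω → H} (hV : Measurable V) (hInt : Integrable V P)
    (hV2 : Integrable (fun ω => ‖V ω‖ ^ 2) P) {k : ℕ} [NeZero k] {ξ : Fin k → H}
    (hpp : IsPrincipal P V ξ) : SelfConsistent P V ξ := by
  let A := fun j => V ⁻¹' attractionDomain ξ j
  set z := fun j => ⨍ ω in A j, V ω ∂P
  have hsplit : ∀ j, ∫ ω in A j, ‖V ω - ξ j‖ ^ 2 ∂P
      = ∫ ω in A j, ‖V ω - z j‖ ^ 2 ∂P + P.real (A j) * ‖z j - ξ j‖ ^ 2 := fun j => by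
    rw [integral_norm_sub_sq_eq_add hInt.restrict hV2.restrict, measureReal_restrict_apply_univ]
  have hgap : ∑ j, P.real (A j) * ‖z j - ξ j‖ ^ 2 ≤ 0 := by
    have hopt := hpp z
    have hcells := integral_iInf_norm_sub_sq_le_sum hV hInt hV2 ξ z
    rw [integral_iInf_norm_sub_sq_eq_sum hV hInt hV2 ξ] at hopt
    rw [Finset.sum_congr rfl fun j _ => hsplit j, Finset.sum_add_distrib] at hopt
    linarith
  have hnonneg : ∀ j ∈ Finset.univ, 0 ≤ P.real (A j) * ‖z j - ξ j‖ ^ 2 := fun j _ => by positivity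
  intro j
  rw [← measure_smul_setAverage _ (measure_ne_top P (A j))]
  rcases mul_eq_zero.1 ((Finset.sum_eq_zero_iff_of_nonneg hnonneg).1
    (hgap.antisymm (Finset.sum_nonneg hnonneg)) j (Finset.mem_univ j)) with hnull | hsame
  · rw [hnull, zero_smul, ← Measure.real, hnull, zero_smul]
  · rw [sq_eq_zero_iff, norm_eq_zero, sub_eq_zero] at hsame
    exact congrArg _ hsame

theorem finrank_span_range_sub_lt_card {R E ι : Type*} [CommRing R] [Nontrivial R]
    [AddCommGroup E] [Module R E] [Fintype ι] {c : ι → R} (hc : ∑ i, c i = 1) {v : ι → E} {a : E}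
    (ha : ∑ i, c i • v i = a) :
    Module.finrank R (Submodule.span R (Set.range fun i => v i - a)) < Fintype.card ι := by
  have hrel : ∑ i, c i • (v i - a) = 0 := by
    simp only [smul_sub, Finset.sum_sub_distrib, ← Finset.sum_smul, ha, hc, one_smul, sub_self]
  have hdep : ¬ LinearIndependent R fun i => v i - a := fun hli => by
    have hzero := Fintype.linearIndependent_iff.1 hli c hrel
    rw [Finset.sum_eq_zero fun i _ => hzero i] at hc
    exact zero_ne_one hc
  refine (finrank_range_le_card _).lt_of_ne fun heq => hdep ?_
  exact linearIndependent_iff_card_eq_finrank_span.2 heq.symm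

theorem principal_span_dim_lt_general {H : Type*}
    [NormedAddCommGroup H] [InnerProductSpace ℝ H] [CompleteSpace H]
    [MeasurableSpace H] [BorelSpace H]
    (P : Measure Ω) [IsProbabilityMeasure P]
    (V : Ω → H) (hmeas : Measurable V)
    (hm2 : Integrable (fun ω => ‖V ω‖ ^ 2) P)
    (hInt : Integrable V P) (μ0 : H) (hmean : ∫ ω, V ω ∂P = μ0)
    {k : ℕ} (hk : 0 < k) (ξ : Fin k → H) (hpp : IsPrincipal P V ξ) :
    Module.finrank ℝ ↥(Submodule.span ℝ (Set.range fun j => ξ j - μ0)) < k := by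
  have : NeZero k := ⟨hk.ne'⟩
  have hsc : SelfConsistent P V ξ := hpp.selfConsistent hmeas hInt hm2
  have hcenter := hmean ▸ hsc.sum_smul_eq_integral hmeas hInt
  simpa using finrank_span_range_sub_lt_card
    (sum_toReal_measure_preimage_attractionDomain hmeas ξ) hcenter

/-- The `k` principal points of a random element with mean `μ0`, recentered at the mean,
span a subspace of dimension strictly smaller than `k`. -/
theorem principal_span_dim_lt {H : Type*}
    [NormedAddCommGroup H] [InnerProductSpace ℝ H] [CompleteSpace H]
    [SecondCountableTopology H] [MeasurableSpace H] [BorelSpace H]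
    (P : Measure Ω) [IsProbabilityMeasure P]
    (V : Ω → H) (hmeas : Measurable V)
    (hm2 : Integrable (fun ω => ‖V ω‖ ^ 2) P)
    (hInt : Integrable V P) (μ0 : H) (hmean : ∫ ω, V ω ∂P = μ0)
    {k : ℕ} (hk : 0 < k) (ξ : Fin k → H) (hpp : IsPrincipal P V ξ) :
    Module.finrank ℝ ↥(Submodule.span ℝ (Set.range fun j => ξ j - μ0)) < k :=
  principal_span_dim_lt_general P V hmeas hm2 hInt μ0 hmean hk ξ hpp
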